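/- arXiv:1903.06887 — 2 statements merged into one kernel-verified Lean document; each statement's English description precedes it below -/
import Mathlib

section
/- Let Φ be a root system in V in which all roots have the same length (‖α‖ = ‖β‖ for all α, β ∈ Φ), let ω ∈ V be regular for Φ, and let s₀ > 0. Then the set {α ∈ Φ : ⟨ω, α⟩ = s₀} is linearly independent in V. -/
open scoped RealInnerProductSpace

/-- The reflection associated to a vector `α` in a real inner product space:
`s_α (x) = x - (2⟪x,α⟫/⟪α,α⟫) α`. -/
noncomputable def sRefl {V : Type*} [NormedAddCommGroup V] [InnerProductSpace ℝ V]
    (α : V) (x : V) : V :=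
  x - (2 * ⟪x, α⟫ / ⟪α, α⟫) • α

/-- A (reduced, crystallographic) root system in a real inner product space `V`. -/
structure IsRootSystem {V : Type*} [NormedAddCommGroup V] [InnerProductSpace ℝ V]
    (Φ : Finset V) : Prop where
  zero_not_mem : (0 : V) ∉ Φ
  refl_mem : ∀ α ∈ Φ, ∀ β ∈ Φ, sRefl α β ∈ Φ
  crystallographic : ∀ α ∈ Φ, ∀ β ∈ Φ, ∃ n : ℤ, 2 * ⟪β, α⟫ / ⟪α, α⟫ = (n : ℝ)
  reduced : ∀ α ∈ Φ, ∀ c : ℝ, c • α ∈ Φ → c = 1 ∨ c = -1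


/-- Vectors lying strictly on one side of a hyperplane with pairwise non-acute angles
are linearly independent. -/
lemma linearIndependent_of_obtuse {V : Type*} [NormedAddCommGroup V] [InnerProductSpace ℝ V]
    {ι : Type*} (ω : V) (v : ι → V)
    (hpos : ∀ i, 0 < ⟪ω, v i⟫)
    (hobt : ∀ i j, i ≠ j → ⟪v i, v j⟫ ≤ 0) :
    LinearIndependent ℝ v := by
  classical
  rw [linearIndependent_iff']
  intro s g hg i hi
  set P := s.filter (fun i => 0 < g i) with hP
  set N := s.filter (fun i => g i < 0) with hN
  set x := ∑ i ∈ P, g i • v i with hxdef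
  have hNsub : N ⊆ s.filter (fun i => ¬ 0 < g i) := by
    intro j hj
    simp only [hN, Finset.mem_filter] at hj
    simp [Finset.mem_filter, hj.1, not_lt, le_of_lt hj.2]
  have hsplit : x + ∑ j ∈ N, g j • v j = 0 := by
    have h2 : ∑ j ∈ s.filter (fun i => ¬ 0 < g i), g j • v j = ∑ j ∈ N, g j • v j := by
      refine (Finset.sum_subset hNsub fun j hj1 hj2 => ?_).symm
      simp only [Finset.mem_filter, not_lt] at hj1
      simp only [hN, Finset.mem_filter, not_and, not_lt] at hj2
      have : g j = 0 := le_antisymm hj1.2 (hj2 hj1.1)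
      simp [this]
    rw [← hg, ← Finset.sum_filter_add_sum_filter_not s (fun i => 0 < g i), h2]
  have hx : x = ∑ j ∈ N, (-g j) • v j := by
    rw [eq_neg_of_add_eq_zero_left hsplit]
    simp [neg_smul, Finset.sum_neg_distrib]
  have hxx : ⟪x, x⟫ ≤ 0 := by
    nth_rewrite 2 [hx]
    rw [hxdef, sum_inner]
    apply Finset.sum_nonpos
    intro i hiP
    rw [inner_sum]
    apply Finset.sum_nonpos
    intro j hjN
    rw [real_inner_smul_left, real_inner_smul_right]
    simp only [hP, Finset.mem_filter] at hiP
    simp only [hN, Finset.mem_filter] at hjN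
    have hij : i ≠ j := by
      rintro rfl; exact absurd hiP.2 (not_lt.mpr (le_of_lt hjN.2))
    have h1 : (0:ℝ) ≤ -g j := by linarith [hjN.2]
    exact mul_nonpos_of_nonneg_of_nonpos (le_of_lt hiP.2)
      (mul_nonpos_of_nonneg_of_nonpos h1 (hobt i j hij))
  have hx0 : x = 0 := by
    rw [← inner_self_eq_zero (𝕜 := ℝ)]
    exact le_antisymm hxx (real_inner_self_nonneg)
  have hP0 : ∀ i ∈ P, g i = 0 := by
    have h1 : ∑ i ∈ P, g i * ⟪ω, v i⟫ = 0 := by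
      have : ⟪ω, x⟫ = 0 := by rw [hx0, inner_zero_right]
      rw [hxdef, inner_sum] at this
      simpa [real_inner_smul_right, mul_comm] using this
    intro i hiP
    have hnn : ∀ j ∈ P, 0 ≤ g j * ⟪ω, v j⟫ := by
      intro j hj
      simp only [hP, Finset.mem_filter] at hj
      exact mul_nonneg (le_of_lt hj.2) (le_of_lt (hpos j))
    have := (Finset.sum_eq_zero_iff_of_nonneg hnn).mp h1 i hiP
    simp only [hP, Finset.mem_filter] at hiP
    nlinarith [hpos i, hiP.2]
  have hN0 : ∀ j ∈ N, g j = 0 := by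
    have h1 : ∑ j ∈ N, (-g j) * ⟪ω, v j⟫ = 0 := by
      have : ⟪ω, x⟫ = 0 := by rw [hx0, inner_zero_right]
      rw [hx, inner_sum] at this
      simpa [real_inner_smul_right, mul_comm] using this
    intro j hjN
    have hnn : ∀ k ∈ N, 0 ≤ (-g k) * ⟪ω, v k⟫ := by
      intro k hk
      simp only [hN, Finset.mem_filter] at hk
      exact mul_nonneg (by linarith [hk.2]) (le_of_lt (hpos k))
    have := (Finset.sum_eq_zero_iff_of_nonneg hnn).mp h1 j hjN
    simp only [hN, Finset.mem_filter] at hjN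
    nlinarith [hpos j, hjN.2]
  by_contra hgi
  rcases lt_trichotomy (g i) 0 with h | h | h
  · exact hgi (hN0 i (by simp [hN, Finset.mem_filter, hi, h]))
  · exact hgi h
  · exact hgi (hP0 i (by simp [hP, Finset.mem_filter, hi, h]))

/-- Simply-laced case: in a root system all of whose roots have the same length, the set of
roots pairing with a regular vector `ω` to a fixed positive value `s₀` is linearly
independent. -/
theorem statement8 {V : Type*} [NormedAddCommGroup V] [InnerProductSpace ℝ V]
    [FiniteDimensional ℝ V]
    (Φ : Finset V) (hΦ : IsRootSystem Φ)
    (hlen : ∀ α ∈ Φ, ∀ β ∈ Φ, ‖α‖ = ‖β‖)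
    (ω : V) (hω : ∀ α ∈ Φ, ⟪ω, α⟫ ≠ 0)
    (s₀ : ℝ) (hs₀ : 0 < s₀) :
    LinearIndependent ℝ
      (fun x : {α : V | α ∈ Φ ∧ ⟪ω, α⟫ = s₀} => (x : V)) := by
  have key : ∀ α ∈ Φ, ∀ β ∈ Φ, ⟪ω, α⟫ = s₀ → ⟪ω, β⟫ = s₀ → α ≠ β → ⟪α, β⟫ ≤ 0 := by
    intro α hαΦ β hβΦ hαs hβs hne
    by_contra hpos'
    push_neg at hpos'
    have hα0 : α ≠ 0 := fun h => hΦ.zero_not_mem (h ▸ hαΦ)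
    have haa : 0 < ⟪α, α⟫ := by
      rw [real_inner_self_eq_norm_mul_norm]
      exact mul_pos (norm_pos_iff.mpr hα0) (norm_pos_iff.mpr hα0)
    obtain ⟨n, hn⟩ := hΦ.crystallographic α hαΦ β hβΦ
    have hba : 0 < ⟪β, α⟫ := by rwa [real_inner_comm]
    have hn' : 2 * ⟪β, α⟫ = (n : ℝ) * ⟪α, α⟫ := by
      field_simp at hn; linarith [hn]
    have hn1 : (1 : ℤ) ≤ n := by
      by_contra h
      push_neg at h
      have : (n : ℝ) ≤ 0 := by exact_mod_cast Int.lt_add_one_iff.mp (by omega : n < 0 + 1)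
      nlinarith
    rcases eq_or_lt_of_le hn1 with h1 | h2
    · -- n = 1 : β - α ∈ Φ, pairing 0 with ω, contradiction
      have hrefl : sRefl α β = β - α := by
        rw [sRefl, hn, ← h1]
        norm_num
      have hmem : β - α ∈ Φ := hrefl ▸ hΦ.refl_mem α hαΦ β hβΦ
      have : ⟪ω, β - α⟫ = 0 := by rw [inner_sub_right, hαs, hβs, sub_self]
      exact hω _ hmem this
    · -- n ≥ 2 : equality in Cauchy–Schwarz forces β = α
      have hnorm : ‖β‖ = ‖α‖ := hlen β hβΦ α hαΦ
      have hge : ‖β‖ * ‖α‖ ≤ ⟪β, α⟫ := by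
        have h2' : (2 : ℝ) ≤ (n : ℝ) := by exact_mod_cast h2
        have : ⟪α, α⟫ ≤ ⟪β, α⟫ := by nlinarith
        calc ‖β‖ * ‖α‖ = ‖α‖ * ‖α‖ := by rw [hnorm]
          _ = ⟪α, α⟫ := (real_inner_self_eq_norm_mul_norm α).symm
          _ ≤ ⟪β, α⟫ := this
      have heq : ⟪β, α⟫ = ‖β‖ * ‖α‖ := le_antisymm (real_inner_le_norm β α) hge
      have := inner_eq_norm_mul_iff_real.mp heq
      rw [hnorm] at this
      have hβα : β = α := smul_right_injective V (by simpa [hnorm] using norm_ne_zero_iff.mpr hα0) this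
      exact hne hβα.symm
  apply linearIndependent_of_obtuse ω
  · intro i
    rw [i.prop.2]; exact hs₀
  · intro i j hij
    exact key i i.prop.1 j j.prop.1 i.prop.2 j.prop.2 (Subtype.coe_injective.ne hij)
end

section
/- Let n ≥ 1, let (e₁, …, e_n) be the standard orthonormal basis of Euclidean space ℝⁿ, and let Φ(B_n) = {ε·e_i : ε ∈ {1,−1}, 1 ≤ i ≤ n} ∪ {ε·e_i + ε'·e_j : ε, ε' ∈ {1,−1}, 1 ≤ i < j ≤ n}. Suppose ω ∈ ℝⁿ satisfies ⟨ω, α⟩ ≠ 0 for every α ∈ Φ(B_n), and let s₀ > 0 and t₀ > 0. Then the set {α ∈ Φ(B_n) : ‖α‖² = 2 and ⟨ω, α⟩ = s₀} ∪ {β ∈ Φ(B_n) : ‖β‖² = 1 and ⟨ω, β⟩ = t₀} is linearly independent in ℝⁿ. -/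
/-! Regularity of `ω` makes the numbers `|ω i|` nonzero and pairwise distinct. Call the
coordinate of a long root `a e_i + b e_j` with the larger `|ω|` its leading coordinate `u`.
Since `s₀ > 0`, the sign `a` at `u` must be the sign of `ω u`, and then `|ω j| = |s₀ - |ω u||`
pins down the other coordinate: distinct long roots at level `s₀` have distinct leading
coordinates. This triangularity makes them linearly independent, and shows that a nonzero vector
of their span is nonzero at the leading coordinate of one of them. So if some `e_k` lay in the
span, we could take one with `|ω k|` minimal; the long root `a e_k + b e_j` leading at `k` would
put `e_j` in the span too, with `|ω j| < |ω k|`. Finally, at most one short root `ε e_m` has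
`⟪ω, ε e_m⟫ = t₀`, and it lies outside the span of the long ones. -/

open scoped RealInnerProductSpace

/-- The short roots `±e_i` of the root system of type `B_n` in `ℝⁿ`. -/
def shortRootsB (n : ℕ) : Set (EuclideanSpace ℝ (Fin n)) :=
  {v | ∃ (ε : ℝ) (i : Fin n), (ε = 1 ∨ ε = -1) ∧ v = ε • EuclideanSpace.single i (1 : ℝ)}

/-- The long roots `±e_i ± e_j` (`i < j`) of the root system of type `B_n` in `ℝⁿ`. -/
def longRootsB (n : ℕ) : Set (EuclideanSpace ℝ (Fin n)) :=
  {v | ∃ (ε δ : ℝ) (i j : Fin n), (ε = 1 ∨ ε = -1) ∧ (δ = 1 ∨ δ = -1) ∧ i < j ∧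
    v = ε • EuclideanSpace.single i (1 : ℝ) + δ • EuclideanSpace.single j (1 : ℝ)}

/-- The root system of type `B_n` in `ℝⁿ`. -/
def PhiB (n : ℕ) : Set (EuclideanSpace ℝ (Fin n)) := shortRootsB n ∪ longRootsB n

section LeadingCoord

variable {K M ι α : Type*} [Field K] [AddCommGroup M] [Module K M] [LinearOrder α]

def IsLeadingCoord (c : ι → M →ₗ[K] K) (h : ι → α) (v : M) (u : ι) : Prop :=
  c u v ≠ 0 ∧ ∀ k, c k v ≠ 0 → h k ≤ h u

def LeadingCoordsUnique (c : ι → M →ₗ[K] K) (h : ι → α) (S : Set M) : Prop :=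
  ∀ v ∈ S, ∀ w ∈ S, ∀ u, IsLeadingCoord c h v u → IsLeadingCoord c h w u → v = w

variable [Finite ι] {c : ι → M →ₗ[K] K} {h : ι → α} {S : Set M}

theorem exists_isLeadingCoord_linearCombination_ne_zero (hS0 : ∀ v ∈ S, ∃ u, c u v ≠ 0)
    (hS : LeadingCoordsUnique c h S)
    {l : M →₀ K} (hl : l ∈ Finsupp.supported K K S) (hl0 : l ≠ 0) :
    ∃ v ∈ S, ∃ u, IsLeadingCoord c h v u ∧ c u (Finsupp.linearCombination K id l) ≠ 0 := by
  classical
  have := Fintype.ofFinite ι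
  set T := Finset.univ.filter fun u => ∃ v ∈ l.support, c u v ≠ 0
  have mem_T : ∀ u, ∀ v ∈ l.support, c u v ≠ 0 → u ∈ T := fun u v hv hu =>
    Finset.mem_filter.2 ⟨Finset.mem_univ u, v, hv, hu⟩
  obtain ⟨v₀, hv₀⟩ := Finsupp.support_nonempty_iff.2 hl0
  obtain ⟨u₀, hu₀⟩ := hS0 v₀ (hl hv₀)
  obtain ⟨u, huT, hmax⟩ := T.exists_max_image h ⟨u₀, mem_T u₀ v₀ hv₀ hu₀⟩
  obtain ⟨v, hv, hvu⟩ := (Finset.mem_filter.1 huT).2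
  have lead : ∀ w ∈ l.support, c u w ≠ 0 → IsLeadingCoord c h w u :=
    fun w hw hwu => ⟨hwu, fun k hk => hmax k (mem_T k w hw hk)⟩
  refine ⟨v, hl hv, u, lead v hv hvu, ?_⟩
  have only_v : ∀ w ∈ l.support, w ≠ v → l w • c u w = 0 := fun w hw hwv =>
    smul_eq_zero_of_right _ <| by_contra fun hwu =>
      hwv (hS w (hl hw) v (hl hv) u (lead w hw hwu) (lead v hv hvu))
  rw [Finsupp.linearCombination_apply, Finsupp.sum, map_sum,
    Finset.sum_eq_single_of_mem v hv (by simpa using only_v)]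
  simpa using ⟨Finsupp.mem_support_iff.1 hv, hvu⟩

theorem linearIndepOn_of_leadingCoordsUnique (hS0 : ∀ v ∈ S, ∃ u, c u v ≠ 0)
    (hS : LeadingCoordsUnique c h S) :
    LinearIndepOn K id S := by
  refine linearIndepOn_iff.2 fun l hl hl0 => by_contra fun hne => ?_
  obtain ⟨-, -, u, -, hu⟩ := exists_isLeadingCoord_linearCombination_ne_zero hS0 hS hl hne
  exact hu (by rw [hl0, map_zero])

theorem exists_isLeadingCoord_of_mem_span (hS0 : ∀ v ∈ S, ∃ u, c u v ≠ 0)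
    (hS : LeadingCoordsUnique c h S)
    {x : M} (hx : x ∈ Submodule.span K S) (hx0 : x ≠ 0) :
    ∃ v ∈ S, ∃ u, IsLeadingCoord c h v u ∧ c u x ≠ 0 := by
  rw [← Set.image_id S, Finsupp.mem_span_image_iff_linearCombination] at hx
  obtain ⟨l, hl, rfl⟩ := hx
  exact exists_isLeadingCoord_linearCombination_ne_zero hS0 hS hl (by rintro rfl; simp at hx0)

end LeadingCoord

section RootsB

variable {n : ℕ} {ω : EuclideanSpace ℝ (Fin n)}

lemma abs_mul_of_eq_one_or_neg_one {ε : ℝ} (hε : ε = 1 ∨ ε = -1) (x : ℝ) : |ε * x| = |x| := by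
  rcases hε with rfl | rfl <;> simp

lemma inner_smul_single (ω : EuclideanSpace ℝ (Fin n)) (ε : ℝ) (i : Fin n) :
    ⟪ω, ε • EuclideanSpace.single i (1 : ℝ)⟫ = ε * ω i := by
  simp [real_inner_smul_right, EuclideanSpace.inner_single_right]

lemma smul_single_mem_PhiB {ε : ℝ} (hε : ε = 1 ∨ ε = -1) (i : Fin n) :
    ε • EuclideanSpace.single i (1 : ℝ) ∈ PhiB n :=
  Or.inl ⟨ε, i, hε, rfl⟩

lemma add_smul_single_mem_PhiB {a b : ℝ} (ha : a = 1 ∨ a = -1) (hb : b = 1 ∨ b = -1)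
    {i j : Fin n} (hij : i ≠ j) :
    a • EuclideanSpace.single i (1 : ℝ) + b • EuclideanSpace.single j (1 : ℝ) ∈ PhiB n := by
  rcases hij.lt_or_gt with h | h
  · exact Or.inr ⟨a, b, i, j, ha, hb, h, rfl⟩
  · exact Or.inr ⟨b, a, j, i, hb, ha, h, add_comm _ _⟩

lemma ne_zero_of_regular (hω : ∀ α ∈ PhiB n, ⟪ω, α⟫ ≠ 0) (i : Fin n) : ω i ≠ 0 := by
  have := hω _ (smul_single_mem_PhiB (ε := 1) (Or.inl rfl) i)
  rwa [inner_smul_single, one_mul] at this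

lemma abs_injective_of_regular (hω : ∀ α ∈ PhiB n, ⟪ω, α⟫ ≠ 0) :
    Function.Injective fun i => |ω i| := by
  intro i j hij
  by_contra hne
  rcases abs_eq_abs.1 hij with h | h
  · exact hω _ (add_smul_single_mem_PhiB (Or.inl rfl) (Or.inr rfl) hne)
      (by rw [inner_add_right, inner_smul_single, inner_smul_single, h]; ring)
  · exact hω _ (add_smul_single_mem_PhiB (Or.inl rfl) (Or.inl rfl) hne)
      (by rw [inner_add_right, inner_smul_single, inner_smul_single, h]; ring)

lemma norm_sq_of_mem_shortRootsB {α : EuclideanSpace ℝ (Fin n)} (hα : α ∈ shortRootsB n) :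
    ‖α‖ ^ 2 = 1 := by
  obtain ⟨ε, i, hε, rfl⟩ := hα
  rcases hε with rfl | rfl <;> simp

lemma norm_sq_of_mem_longRootsB {α : EuclideanSpace ℝ (Fin n)} (hα : α ∈ longRootsB n) :
    ‖α‖ ^ 2 = 2 := by
  obtain ⟨a, b, i, j, ha, hb, hij, rfl⟩ := hα
  rw [← real_inner_self_eq_norm_sq]
  simp only [inner_add_add_self, real_inner_smul_left, real_inner_smul_right,
    EuclideanSpace.inner_single_left, PiLp.single_apply, hij.ne, hij.ne', if_true,
    if_false]
  rcases ha with rfl | rfl <;> rcases hb with rfl | rfl <;> norm_num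

def longRootsAt (ω : EuclideanSpace ℝ (Fin n)) (s : ℝ) : Set (EuclideanSpace ℝ (Fin n)) :=
  {α ∈ PhiB n | ‖α‖ ^ 2 = 2 ∧ ⟪ω, α⟫ = s}

def shortRootsAt (ω : EuclideanSpace ℝ (Fin n)) (t : ℝ) : Set (EuclideanSpace ℝ (Fin n)) :=
  {β ∈ PhiB n | ‖β‖ ^ 2 = 1 ∧ ⟪ω, β⟫ = t}

variable {s t : ℝ}

lemma exists_eq_of_mem_longRootsAt {α : EuclideanSpace ℝ (Fin n)} (hα : α ∈ longRootsAt ω s) :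
    ∃ (a b : ℝ) (i j : Fin n), (a = 1 ∨ a = -1) ∧ (b = 1 ∨ b = -1) ∧ i ≠ j ∧
      α = a • EuclideanSpace.single i (1 : ℝ) + b • EuclideanSpace.single j (1 : ℝ) ∧
      a * ω i + b * ω j = s := by
  obtain ⟨hshort | ⟨a, b, i, j, ha, hb, hij, rfl⟩, hnorm, hlevel⟩ := hα
  · norm_num [norm_sq_of_mem_shortRootsB hshort] at hnorm
  · refine ⟨a, b, i, j, ha, hb, hij.ne, rfl, ?_⟩
    simpa [inner_add_right, inner_smul_single] using hlevel

lemma exists_eq_of_mem_shortRootsAt {β : EuclideanSpace ℝ (Fin n)} (hβ : β ∈ shortRootsAt ω t) :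
    ∃ (ε : ℝ) (i : Fin n), (ε = 1 ∨ ε = -1) ∧ β = ε • EuclideanSpace.single i (1 : ℝ) ∧
      ε * ω i = t := by
  obtain ⟨⟨ε, i, hε, rfl⟩ | hlong, hnorm, hlevel⟩ := hβ
  · exact ⟨ε, i, hε, rfl, inner_smul_single ω ε i ▸ hlevel⟩
  · norm_num [norm_sq_of_mem_longRootsB hlong] at hnorm

lemma shortRootsAt_subsingleton (hω : ∀ α ∈ PhiB n, ⟪ω, α⟫ ≠ 0) :
    (shortRootsAt ω t).Subsingleton := by
  intro β hβ β' hβ'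
  obtain ⟨ε, i, hε, rfl, hi⟩ := exists_eq_of_mem_shortRootsAt hβ
  obtain ⟨ε', j, hε', rfl, hj⟩ := exists_eq_of_mem_shortRootsAt hβ'
  have hij : i = j := abs_injective_of_regular hω <| by
    dsimp only
    rw [← abs_mul_of_eq_one_or_neg_one hε, hi, ← hj, abs_mul_of_eq_one_or_neg_one hε']
  subst hij
  rw [mul_right_cancel₀ (ne_zero_of_regular hω i) (hi.trans hj.symm)]

lemma smul_single_add_smul_single_apply (a b : ℝ) (i j k : Fin n) :
    (a • EuclideanSpace.single i (1 : ℝ) + b • EuclideanSpace.single j (1 : ℝ) :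
      EuclideanSpace ℝ (Fin n)) k = (if k = i then a else 0) + (if k = j then b else 0) := by
  simp [PiLp.single_apply]

lemma exists_coord_ne_zero_of_mem_longRootsAt {α : EuclideanSpace ℝ (Fin n)}
    (hα : α ∈ longRootsAt ω s) : ∃ u, EuclideanSpace.projₗ u α ≠ 0 := by
  obtain ⟨a, b, i, j, ha, -, hij, rfl, -⟩ := exists_eq_of_mem_longRootsAt hα
  refine ⟨i, ?_⟩
  rcases ha with rfl | rfl <;> simp [hij]

lemma exists_eq_of_isLeadingCoord (hω : ∀ α ∈ PhiB n, ⟪ω, α⟫ ≠ 0)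
    {α : EuclideanSpace ℝ (Fin n)} (hα : α ∈ longRootsAt ω s) {u : Fin n}
    (hu : IsLeadingCoord EuclideanSpace.projₗ (fun k => |ω k|) α u) :
    ∃ (a b : ℝ) (j : Fin n), (a = 1 ∨ a = -1) ∧ (b = 1 ∨ b = -1) ∧ |ω j| < |ω u| ∧
      α = a • EuclideanSpace.single u (1 : ℝ) + b • EuclideanSpace.single j (1 : ℝ) ∧
      a * ω u + b * ω j = s := by
  obtain ⟨a, b, i, j, ha, hb, hij, rfl, hlevel⟩ := exists_eq_of_mem_longRootsAt hα
  obtain ⟨hu0, hmax⟩ := hu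
  simp only [EuclideanSpace.projₗ, PiLp.projₗ_apply, smul_single_add_smul_single_apply] at hu0 hmax
  have lt_of_le : ∀ {k k'}, k ≠ k' → |ω k| ≤ |ω k'| → |ω k| < |ω k'| :=
    fun hne hle => hle.lt_of_ne ((abs_injective_of_regular hω).ne hne)
  by_cases hui : u = i
  · subst hui
    refine ⟨a, b, j, ha, hb, lt_of_le hij.symm (hmax j ?_), rfl, hlevel⟩
    rcases hb with rfl | rfl <;> simp [hij.symm]
  · have huj : u = j := by
      by_contra huj
      simp [hui, huj] at hu0
    subst huj
    refine ⟨b, a, i, hb, ha, lt_of_le hij (hmax i ?_), add_comm _ _, by linarith⟩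
    rcases ha with rfl | rfl <;> simp [hij]

lemma mul_pos_of_add_pos_of_abs_lt {a b x y : ℝ} (ha : a = 1 ∨ a = -1)
    (hb : b = 1 ∨ b = -1) (hxy : |y| < |x|) (hpos : 0 < a * x + b * y) : 0 < a * x := by
  by_contra! hneg
  have h₁ : |a * x| = -(a * x) := abs_of_nonpos hneg
  have h₂ : b * y ≤ |b * y| := le_abs_self _
  rw [abs_mul_of_eq_one_or_neg_one ha] at h₁
  rw [abs_mul_of_eq_one_or_neg_one hb] at h₂
  linarith

lemma leadingCoordsUnique_longRootsAt (hω : ∀ α ∈ PhiB n, ⟪ω, α⟫ ≠ 0) (hs : 0 < s) :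
    LeadingCoordsUnique EuclideanSpace.projₗ (fun k => |ω k|) (longRootsAt ω s) := by
  intro α hα β hβ u hαu hβu
  obtain ⟨a, b, j, ha, hb, hj, rfl, hlevel⟩ := exists_eq_of_isLeadingCoord hω hα hαu
  obtain ⟨a', b', k, ha', hb', hk, rfl, hlevel'⟩ := exists_eq_of_isLeadingCoord hω hβ hβu
  have hpos := mul_pos_of_add_pos_of_abs_lt ha hb hj (hlevel ▸ hs)
  have hpos' := mul_pos_of_add_pos_of_abs_lt ha' hb' hk (hlevel' ▸ hs)
  obtain rfl : a = a' := by
    rcases ha with rfl | rfl <;> rcases ha' with rfl | rfl <;> first | rfl | linarith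
  have hbb' : b * ω j = b' * ω k := by linarith
  obtain rfl : j = k := abs_injective_of_regular hω <| by
    dsimp only
    rw [← abs_mul_of_eq_one_or_neg_one hb, hbb', abs_mul_of_eq_one_or_neg_one hb']
  rw [mul_right_cancel₀ (ne_zero_of_regular hω j) hbb']

lemma linearIndepOn_longRootsAt (hω : ∀ α ∈ PhiB n, ⟪ω, α⟫ ≠ 0) (hs : 0 < s) :
    LinearIndepOn ℝ id (longRootsAt ω s) :=
  linearIndepOn_of_leadingCoordsUnique (fun _ => exists_coord_ne_zero_of_mem_longRootsAt)
    (leadingCoordsUnique_longRootsAt hω hs)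

lemma single_notMem_span_longRootsAt (hω : ∀ α ∈ PhiB n, ⟪ω, α⟫ ≠ 0) (hs : 0 < s)
    (m : Fin n) : EuclideanSpace.single m (1 : ℝ) ∉ Submodule.span ℝ (longRootsAt ω s) := by
  classical
  intro hm
  obtain ⟨k, hk, hmin⟩ := (Finset.univ.filter fun k =>
      EuclideanSpace.single k (1 : ℝ) ∈ Submodule.span ℝ (longRootsAt ω s)).exists_min_image
    (fun k => |ω k|) ⟨m, by simpa using hm⟩
  rw [Finset.mem_filter] at hk
  obtain ⟨α, hα, u, hαu, hu⟩ := exists_isLeadingCoord_of_mem_span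
    (fun _ => exists_coord_ne_zero_of_mem_longRootsAt)
    (leadingCoordsUnique_longRootsAt hω hs) hk.2 (by simp)
  obtain rfl : u = k := by
    by_contra huk
    simp [huk] at hu
  obtain ⟨a, b, j, ha, hb, hj, rfl, -⟩ := exists_eq_of_isLeadingCoord hω hα hαu
  have hjmem : EuclideanSpace.single j (1 : ℝ) ∈ Submodule.span ℝ (longRootsAt ω s) := by
    have := Submodule.sub_mem _ (Submodule.subset_span hα) (Submodule.smul_mem _ a hk.2)
    convert Submodule.smul_mem _ b this using 1
    rcases ha with rfl | rfl <;> rcases hb with rfl | rfl <;> module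
  exact (hmin j (by simpa using hjmem)).not_gt hj

end RootsB

theorem statement12_general (n : ℕ) (ω : EuclideanSpace ℝ (Fin n))
    (hω : ∀ α ∈ PhiB n, ⟪ω, α⟫ ≠ 0) (s₀ t₀ : ℝ) (hs₀ : 0 < s₀) :
    LinearIndependent ℝ
      (fun x : ({α ∈ PhiB n | ‖α‖ ^ 2 = 2 ∧ ⟪ω, α⟫ = s₀} ∪
                {β ∈ PhiB n | ‖β‖ ^ 2 = 1 ∧ ⟪ω, β⟫ = t₀} :
                Set (EuclideanSpace ℝ (Fin n))) => (x : EuclideanSpace ℝ (Fin n))) := by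
  change LinearIndepOn ℝ id (longRootsAt ω s₀ ∪ shortRootsAt ω t₀)
  rcases (shortRootsAt_subsingleton (t := t₀) hω).eq_empty_or_singleton with hempty | ⟨β, hβ⟩
  · rw [hempty, Set.union_empty]
    exact linearIndepOn_longRootsAt hω hs₀
  · obtain ⟨ε, m, hε, rfl, -⟩ := exists_eq_of_mem_shortRootsAt (hβ ▸ Set.mem_singleton _)
    rw [hβ, Set.union_singleton]
    refine (linearIndepOn_longRootsAt hω hs₀).id_insert fun hmem => ?_
    refine single_notMem_span_longRootsAt hω hs₀ m ?_
    convert Submodule.smul_mem _ ε hmem using 1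
    rcases hε with rfl | rfl <;> module

/-- Type `B_n` case of linear independence: for `ω` regular and `s₀, t₀ > 0`, the long roots
pairing to `s₀` together with the short roots pairing to `t₀` form a linearly independent set. -/
theorem statement12 (n : ℕ) (hn : 1 ≤ n) (ω : EuclideanSpace ℝ (Fin n))
    (hω : ∀ α ∈ PhiB n, ⟪ω, α⟫ ≠ 0) (s₀ t₀ : ℝ) (hs₀ : 0 < s₀) (ht₀ : 0 < t₀) :
    LinearIndependent ℝ
      (fun x : ({α ∈ PhiB n | ‖α‖ ^ 2 = 2 ∧ ⟪ω, α⟫ = s₀} ∪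
                {β ∈ PhiB n | ‖β‖ ^ 2 = 1 ∧ ⟪ω, β⟫ = t₀} :
                Set (EuclideanSpace ℝ (Fin n))) => (x : EuclideanSpace ℝ (Fin n))) :=
  statement12_general n ω hω s₀ t₀ hs₀
end
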